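/- arXiv:2502.14946 — 2 statements merged into one kernel-verified Lean document; each statement's English description precedes it below -/
import Mathlib

section
/- Cao–Titi barotropic advection identity: let h > 0 and let v : ℝ² × ℝ → ℝ² be continuously differentiable such that the vertical average v̄ = 𝒜₂v is horizontally divergence-free, ∂_x v̄₁ + ∂_y v̄₂ ≡ 0. Write ṽ = v − v̄. Then for every (x,y): (1/h)∫_{−h}^0 [(v·∇_H)v + w(v)∂_z v](x,y,z) dz = (v̄·∇_H)v̄(x,y) + (1/h)∫_{−h}^0 [(ṽ·∇_H)ṽ + (∇_H·ṽ)ṽ](x,y,z) dz. -/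
/-!
Fix a column `(x, y)` and write `⨍` for the vertical average over `[-h, 0]`. Differentiating
under the integral sign identifies `∂ₓv̄, ∂ᵧv̄` with `⨍ ∂ₓv, ⨍ ∂ᵧv`, so `∇_H·v̄ = 0` says that the
horizontal divergence `D = ∇_H·v` has zero column average. Hence `w = ∫_z^0 D` vanishes at both
ends of the column, and integrating by parts turns `⨍ w ∂_z v` into `⨍ D v`. On the right, the
integrand is a sum of three products of fluctuations, for the pairs `(v₁, ∂ₓv)`, `(v₂, ∂ᵧv)` and
`(D, v)`, and the covariance formula `⨍ (f - f̄)(g - ḡ) = ⨍ f g - f̄ ḡ` applies to each; since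
`D̄ = 0` the last one has no correction, and the other two corrections are `v̄·∇_H v̄`.
-/

open MeasureTheory intervalIntegral

/-- The barotropic (vertical) average `v̄ = 𝒜₂v` of a horizontal velocity field. -/
noncomputable def baroAvg2 (h : ℝ) (v : ℝ → ℝ → ℝ → ℝ × ℝ) (x y : ℝ) : ℝ × ℝ :=
  h⁻¹ • ∫ z in (-h)..(0:ℝ), v x y z

open Set

namespace MeasureTheory

variable {α E : Type*} [MeasurableSpace α] {μ : Measure α}
  [NormedAddCommGroup E] [NormedSpace ℝ E]

theorem average_add {f g : α → E} (hf : Integrable f μ) (hg : Integrable g μ) :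
    ⨍ x, (f x + g x) ∂μ = (⨍ x, f x ∂μ) + ⨍ x, g x ∂μ := by
  simp only [average_eq, integral_add hf hg, smul_add]

theorem fst_average {F : Type*} [NormedAddCommGroup F] [NormedSpace ℝ F] [CompleteSpace F]
    {f : α → E × F} (hf : Integrable f μ) : (⨍ x, f x ∂μ).1 = ⨍ x, (f x).1 ∂μ := by
  rw [average_eq, average_eq, Prod.smul_fst, fst_integral hf]

theorem snd_average {F : Type*} [NormedAddCommGroup F] [NormedSpace ℝ F] [CompleteSpace E]
    {f : α → E × F} (hf : Integrable f μ) : (⨍ x, f x ∂μ).2 = ⨍ x, (f x).2 ∂μ := by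
  rw [average_eq, average_eq, Prod.smul_snd, snd_integral hf]

theorem average_sub_average_smul_sub_average [IsFiniteMeasure μ] [CompleteSpace E]
    {f : α → ℝ} {g : α → E} (hf : Integrable f μ) (hg : Integrable g μ)
    (hfg : Integrable (fun x => f x • g x) μ) :
    ⨍ x, (f x - ⨍ y, f y ∂μ) • (g x - ⨍ y, g y ∂μ) ∂μ
      = (⨍ x, f x • g x ∂μ) - (⨍ x, f x ∂μ) • ⨍ x, g x ∂μ := by
  set F := ⨍ y, f y ∂μ
  set G := ⨍ y, g y ∂μ
  have hexpand : ∀ x, (f x - F) • (g x - G) = (f x • g x - f x • G) - (F • g x - F • G) :=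
    fun x => by simp only [sub_smul, smul_sub]; abel
  simp_rw [hexpand]
  have hfG : Integrable (fun x => f x • G) μ := hf.smul_const G
  have hFg : Integrable (fun x => F • g x) μ := hg.smul F
  have hfgG : Integrable (fun x => f x • g x - f x • G) μ := hfg.sub hfG
  have hFgG : Integrable (fun x => F • g x - F • G) μ := hFg.sub (integrable_const _)
  rw [average_eq, integral_sub hfgG hFgG, integral_sub hfg hfG,
    integral_sub hFg (integrable_const _), _root_.integral_smul_const, integral_smul,
    integral_const, average_eq]
  by_cases hm : μ.real univ = 0
  · simp [F, G, average_eq, hm]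
  · have hF : ∫ x, f x ∂μ = μ.real univ • F := by simp only [F, average_eq, smul_inv_smul₀ hm]
    have hG : ∫ x, g x ∂μ = μ.real univ • G := by simp only [G, average_eq, smul_inv_smul₀ hm]
    rw [hF, hG]
    match_scalars
    · field_simp
    · field_simp
      ring

end MeasureTheory

section IntervalIntegral

variable {E : Type*} [NormedAddCommGroup E] [NormedSpace ℝ E]

theorem hasDerivAt_intervalIntegral_of_continuous {a b : ℝ} {g g' : ℝ → ℝ → E}
    (hd : ∀ s z, HasDerivAt (fun s' => g s' z) (g' s z) s)
    (hg : Continuous fun p : ℝ × ℝ => g p.1 p.2)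
    (hg' : Continuous fun p : ℝ × ℝ => g' p.1 p.2) (s : ℝ) :
    HasDerivAt (fun s' => ∫ z in a..b, g s' z) (∫ z in a..b, g' s z) s := by
  obtain ⟨C, hC⟩ : ∃ C, ∀ p ∈ Icc (s - 1) (s + 1) ×ˢ uIcc a b, ‖g' p.1 p.2‖ ≤ C :=
    ((isCompact_Icc.prod isCompact_uIcc).image_of_continuousOn
      hg'.norm.continuousOn).bddAbove.imp fun _ hC p hp => hC ⟨p, hp, rfl⟩
  have hslice : ∀ {k : ℝ → ℝ → E}, (Continuous fun p : ℝ × ℝ => k p.1 p.2) →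
      ∀ s', Continuous (k s') := fun hk s' => hk.comp (Continuous.prodMk_right s')
  refine (hasDerivAt_integral_of_dominated_loc_of_deriv_le (bound := fun _ => C)
    (Metric.ball_mem_nhds s one_pos)
    (.of_forall fun s' => (hslice hg s').aestronglyMeasurable)
    ((hslice hg s).intervalIntegrable a b) (hslice hg' s).aestronglyMeasurable
    (.of_forall fun z hz s' hs' => hC (s', z) ⟨?_, uIoc_subset_uIcc hz⟩)
    intervalIntegrable_const (.of_forall fun z _ s' _ => hd s' z)).2
  rw [Real.ball_eq_Ioo] at hs'
  exact Ioo_subset_Icc_self hs'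

theorem hasDerivAt_intervalAverage_of_continuous {a b : ℝ} {g g' : ℝ → ℝ → E}
    (hd : ∀ s z, HasDerivAt (fun s' => g s' z) (g' s z) s)
    (hg : Continuous fun p : ℝ × ℝ => g p.1 p.2)
    (hg' : Continuous fun p : ℝ × ℝ => g' p.1 p.2) (s : ℝ) :
    HasDerivAt (fun s' => ⨍ z in a..b, g s' z) (⨍ z in a..b, g' s z) s := by
  simp_rw [interval_average_eq]
  exact (hasDerivAt_intervalIntegral_of_continuous hd hg hg' s).const_smul _

/-- Integration by parts: the primitive `z ↦ ∫_z^b D` vanishes at both ends. -/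
theorem integral_primitive_smul_deriv_eq [CompleteSpace E] {a b : ℝ} {D : ℝ → ℝ} {u u' : ℝ → E}
    (hD : Continuous D) (hu : ∀ z ∈ uIcc a b, HasDerivAt u (u' z) z)
    (hu' : IntervalIntegrable u' volume a b) (hD0 : ∫ z in a..b, D z = 0) :
    ∫ z in a..b, (∫ t in z..b, D t) • u' z = ∫ z in a..b, D z • u z := by
  have hW : ∀ z ∈ uIcc a b, HasDerivAt (fun z => ∫ t in z..b, D t) (-D z) z := fun z _ =>
    integral_hasDerivAt_left (hD.intervalIntegrable _ _) (hD.stronglyMeasurableAtFilter _ _)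
      hD.continuousAt
  rw [integral_smul_deriv_eq_deriv_smul hW hu (hD.neg.intervalIntegrable _ _) hu', hD0,
    integral_same]
  simp [intervalIntegral.integral_neg]

theorem inv_smul_integral_neg_eq_intervalAverage (h : ℝ) (f : ℝ → E) :
    h⁻¹ • ∫ z in (-h)..0, f z = ⨍ z in (-h)..0, f z := by
  rw [interval_average_eq, zero_sub, neg_neg]

theorem intervalAverage_primitive_smul_deriv_eq [CompleteSpace E] {a b : ℝ} {D : ℝ → ℝ}
    {u u' : ℝ → E} (hD : Continuous D) (hu : ∀ z ∈ uIcc a b, HasDerivAt u (u' z) z)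
    (hu' : IntervalIntegrable u' volume a b) (hD0 : ⨍ z in a..b, D z = 0) :
    ⨍ z in a..b, (∫ t in z..b, D t) • u' z = ⨍ z in a..b, D z • u z := by
  rcases eq_or_ne a b with rfl | hab
  · simp
  rw [interval_average_eq] at hD0
  rw [interval_average_eq, interval_average_eq, integral_primitive_smul_deriv_eq hD hu hu'
    ((smul_eq_zero.1 hD0).resolve_left (inv_ne_zero (sub_ne_zero.2 hab.symm)))]

end IntervalIntegral

instance isFiniteMeasure_restrict_uIoc (a b : ℝ) : IsFiniteMeasure (volume.restrict (uIoc a b)) :=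
  inferInstanceAs (IsFiniteMeasure (volume.restrict (Ioc _ _)))

section Column

variable {a b : ℝ} {u u' p q : ℝ → ℝ × ℝ}

theorem intervalAverage_fst_add_snd (hp : Continuous p) (hq : Continuous q) :
    ⨍ z in a..b, ((p z).1 + (q z).2) = (⨍ z in a..b, p z).1 + (⨍ z in a..b, q z).2 := by
  rw [average_add hp.fst.integrableOn_uIoc hq.snd.integrableOn_uIoc,
    fst_average hp.integrableOn_uIoc, snd_average hq.integrableOn_uIoc]

theorem intervalAverage_fluctuation_advection_eq (hu : Continuous u) (hp : Continuous p)
    (hq : Continuous q) (hdiv : (⨍ z in a..b, p z).1 + (⨍ z in a..b, q z).2 = 0) :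
    ⨍ z in a..b, ((u z - ⨍ t in a..b, u t).1 • (p z - ⨍ t in a..b, p t)
        + (u z - ⨍ t in a..b, u t).2 • (q z - ⨍ t in a..b, q t)
        + ((p z - ⨍ t in a..b, p t).1 + (q z - ⨍ t in a..b, q t).2) • (u z - ⨍ t in a..b, u t))
      = (⨍ z in a..b, (u z).1 • p z) + (⨍ z in a..b, (u z).2 • q z)
        + (⨍ z in a..b, ((p z).1 + (q z).2) • u z)
        - ((⨍ z in a..b, u z).1 • (⨍ z in a..b, p z)
          + (⨍ z in a..b, u z).2 • ⨍ z in a..b, q z) := by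
  set D : ℝ → ℝ := fun z => (p z).1 + (q z).2
  have hD : Continuous D := hp.fst.add hq.snd
  have hD_avg : ⨍ z in a..b, D z = 0 := (intervalAverage_fst_add_snd hp hq).trans hdiv
  have hcov : ∀ z, (u z - ⨍ t in a..b, u t).1 • (p z - ⨍ t in a..b, p t)
        + (u z - ⨍ t in a..b, u t).2 • (q z - ⨍ t in a..b, q t)
        + ((p z - ⨍ t in a..b, p t).1 + (q z - ⨍ t in a..b, q t).2) • (u z - ⨍ t in a..b, u t)
      = ((u z).1 - ⨍ t in a..b, (u t).1) • (p z - ⨍ t in a..b, p t)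
        + ((u z).2 - ⨍ t in a..b, (u t).2) • (q z - ⨍ t in a..b, q t)
        + (D z - ⨍ t in a..b, D t) • (u z - ⨍ t in a..b, u t) := fun z => by
    have hcoef : (p z - ⨍ t in a..b, p t).1 + (q z - ⨍ t in a..b, q t).2
        = D z - ⨍ t in a..b, D t := by
      simp only [hD_avg, Prod.fst_sub, Prod.snd_sub, D]
      linarith
    rw [hcoef, Prod.fst_sub, Prod.snd_sub, fst_average hu.integrableOn_uIoc,
      snd_average hu.integrableOn_uIoc]
  simp_rw [hcov]
  rw [average_add (Continuous.integrableOn_uIoc (by fun_prop))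
      (Continuous.integrableOn_uIoc (by fun_prop)),
    average_add (Continuous.integrableOn_uIoc (by fun_prop))
      (Continuous.integrableOn_uIoc (by fun_prop)),
    average_sub_average_smul_sub_average hu.fst.integrableOn_uIoc hp.integrableOn_uIoc
      (Continuous.integrableOn_uIoc (by fun_prop)),
    average_sub_average_smul_sub_average hu.snd.integrableOn_uIoc hq.integrableOn_uIoc
      (Continuous.integrableOn_uIoc (by fun_prop)),
    average_sub_average_smul_sub_average hD.integrableOn_uIoc hu.integrableOn_uIoc
      (Continuous.integrableOn_uIoc (by fun_prop)), hD_avg,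
    ← fst_average hu.integrableOn_uIoc, ← snd_average hu.integrableOn_uIoc]
  module

theorem intervalAverage_advection_eq (hu : ∀ z, HasDerivAt u (u' z) z) (hu' : Continuous u')
    (hp : Continuous p) (hq : Continuous q)
    (hdiv : (⨍ z in a..b, p z).1 + (⨍ z in a..b, q z).2 = 0) :
    ⨍ z in a..b, ((u z).1 • p z + (u z).2 • q z + (∫ t in z..b, ((p t).1 + (q t).2)) • u' z)
      = (⨍ z in a..b, u z).1 • (⨍ z in a..b, p z) + (⨍ z in a..b, u z).2 • (⨍ z in a..b, q z)
        + ⨍ z in a..b, ((u z - ⨍ t in a..b, u t).1 • (p z - ⨍ t in a..b, p t)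
          + (u z - ⨍ t in a..b, u t).2 • (q z - ⨍ t in a..b, q t)
          + ((p z - ⨍ t in a..b, p t).1 + (q z - ⨍ t in a..b, q t).2)
            • (u z - ⨍ t in a..b, u t)) := by
  have hu_cont : Continuous u := continuous_iff_continuousAt.2 fun z => (hu z).continuousAt
  have hD : Continuous fun z => (p z).1 + (q z).2 := hp.fst.add hq.snd
  have hWu' : Continuous fun z => (∫ t in z..b, ((p t).1 + (q t).2)) • u' z := by
    simp only [integral_symm b]
    exact (continuous_primitive (fun _ _ => hD.intervalIntegrable _ _) b).fun_neg.smul hu'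
  rw [intervalAverage_fluctuation_advection_eq hu_cont hp hq hdiv,
    average_add (Continuous.integrableOn_uIoc (by fun_prop)) hWu'.integrableOn_uIoc,
    average_add (Continuous.integrableOn_uIoc (by fun_prop))
      (Continuous.integrableOn_uIoc (by fun_prop)),
    intervalAverage_primitive_smul_deriv_eq hD (fun z _ => hu z) (hu'.intervalIntegrable a b)
      ((intervalAverage_fst_add_snd hp hq).trans hdiv)]
  abel

end Column

theorem cao_titi_barotropic_advection_general
    (h : ℝ)
    (v vx vy vz : ℝ → ℝ → ℝ → ℝ × ℝ)
    (vbx vby : ℝ → ℝ → ℝ × ℝ)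
    (hvx : ∀ x y z : ℝ, HasDerivAt (fun x' => v x' y z) (vx x y z) x)
    (hvy : ∀ x y z : ℝ, HasDerivAt (fun y' => v x y' z) (vy x y z) y)
    (hvz : ∀ x y z : ℝ, HasDerivAt (fun z' => v x y z') (vz x y z) z)
    (hcv : Continuous fun p : ℝ × ℝ × ℝ => v p.1 p.2.1 p.2.2)
    (hcvx : Continuous fun p : ℝ × ℝ × ℝ => vx p.1 p.2.1 p.2.2)
    (hcvy : Continuous fun p : ℝ × ℝ × ℝ => vy p.1 p.2.1 p.2.2)
    (hcvz : Continuous fun p : ℝ × ℝ × ℝ => vz p.1 p.2.1 p.2.2)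
    (hbx : ∀ x y : ℝ, HasDerivAt (fun x' => baroAvg2 h v x' y) (vbx x y) x)
    (hby : ∀ x y : ℝ, HasDerivAt (fun y' => baroAvg2 h v x y') (vby x y) y)
    (hdiv : ∀ x y : ℝ, (vbx x y).1 + (vby x y).2 = 0) :
    ∀ x y : ℝ,
      h⁻¹ • (∫ z in (-h)..(0:ℝ),
          ((v x y z).1 • vx x y z + (v x y z).2 • vy x y z
            + (∫ z' in z..(0:ℝ), ((vx x y z').1 + (vy x y z').2)) • vz x y z))
        = (baroAvg2 h v x y).1 • vbx x y + (baroAvg2 h v x y).2 • vby x y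
          + h⁻¹ • (∫ z in (-h)..(0:ℝ),
              ((v x y z - baroAvg2 h v x y).1 • (vx x y z - vbx x y)
                + (v x y z - baroAvg2 h v x y).2 • (vy x y z - vby x y)
                + ((vx x y z - vbx x y).1 + (vy x y z - vby x y).2)
                    • (v x y z - baroAvg2 h v x y))) := by
  intro x y
  simp only [baroAvg2, inv_smul_integral_neg_eq_intervalAverage] at hbx hby ⊢
  have hvbx : vbx x y = ⨍ z in (-h)..0, vx x y z :=
    (hbx x y).unique (hasDerivAt_intervalAverage_of_continuous (fun s z => hvx s y z)
      (hcv.comp (continuous_fst.prodMk (continuous_const.prodMk continuous_snd)))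
      (hcvx.comp (continuous_fst.prodMk (continuous_const.prodMk continuous_snd))) x)
  have hvby : vby x y = ⨍ z in (-h)..0, vy x y z :=
    (hby x y).unique (hasDerivAt_intervalAverage_of_continuous (fun s z => hvy x s z)
      (hcv.comp (continuous_const.prodMk continuous_id))
      (hcvy.comp (continuous_const.prodMk continuous_id)) y)
  have hcol : Continuous fun z : ℝ => ((x, y, z) : ℝ × ℝ × ℝ) := by fun_prop
  have hdiv_col := hdiv x y
  rw [hvbx, hvby] at hdiv_col ⊢
  exact intervalAverage_advection_eq (hvz x y) (hcvz.comp hcol) (hcvx.comp hcol)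
    (hcvy.comp hcol) hdiv_col

/-- **Cao–Titi barotropic advection identity.**
Let `v : ℝ² × ℝ → ℝ²` be continuously differentiable (partial derivatives
`vx = ∂_x v`, `vy = ∂_y v`, `vz = ∂_z v` supplied as data, jointly continuous),
with `v̄ = 𝒜₂v` differentiable with horizontal partials `vbx, vby` and
`∂_x v̄₁ + ∂_y v̄₂ ≡ 0`. Writing `w(v)(x,y,z) = ∫_z^0 (∇_H·v) dz'` and `ṽ = v − v̄`,
for every `(x,y)`:
`(1/h)∫_{−h}^0 [(v·∇_H)v + w(v)∂_z v] dz
  = (v̄·∇_H)v̄ + (1/h)∫_{−h}^0 [(ṽ·∇_H)ṽ + (∇_H·ṽ)ṽ] dz`. -/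
theorem cao_titi_barotropic_advection
    (h : ℝ) (hh : 0 < h)
    (v vx vy vz : ℝ → ℝ → ℝ → ℝ × ℝ)
    (vbx vby : ℝ → ℝ → ℝ × ℝ)
    (hvx : ∀ x y z : ℝ, HasDerivAt (fun x' => v x' y z) (vx x y z) x)
    (hvy : ∀ x y z : ℝ, HasDerivAt (fun y' => v x y' z) (vy x y z) y)
    (hvz : ∀ x y z : ℝ, HasDerivAt (fun z' => v x y z') (vz x y z) z)
    (hcv : Continuous fun p : ℝ × ℝ × ℝ => v p.1 p.2.1 p.2.2)
    (hcvx : Continuous fun p : ℝ × ℝ × ℝ => vx p.1 p.2.1 p.2.2)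
    (hcvy : Continuous fun p : ℝ × ℝ × ℝ => vy p.1 p.2.1 p.2.2)
    (hcvz : Continuous fun p : ℝ × ℝ × ℝ => vz p.1 p.2.1 p.2.2)
    (hbx : ∀ x y : ℝ, HasDerivAt (fun x' => baroAvg2 h v x' y) (vbx x y) x)
    (hby : ∀ x y : ℝ, HasDerivAt (fun y' => baroAvg2 h v x y') (vby x y) y)
    (hdiv : ∀ x y : ℝ, (vbx x y).1 + (vby x y).2 = 0) :
    ∀ x y : ℝ,
      h⁻¹ • (∫ z in (-h)..(0:ℝ),
          ((v x y z).1 • vx x y z + (v x y z).2 • vy x y z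
            + (∫ z' in z..(0:ℝ), ((vx x y z').1 + (vy x y z').2)) • vz x y z))
        = (baroAvg2 h v x y).1 • vbx x y + (baroAvg2 h v x y).2 • vby x y
          + h⁻¹ • (∫ z in (-h)..(0:ℝ),
              ((v x y z - baroAvg2 h v x y).1 • (vx x y z - vbx x y)
                + (v x y z - baroAvg2 h v x y).2 • (vy x y z - vby x y)
                + ((vx x y z - vbx x y).1 + (vy x y z - vby x y).2)
                    • (v x y z - baroAvg2 h v x y))) :=
  cao_titi_barotropic_advection_general h v vx vy vz vbx vby hvx hvy hvz hcv hcvx hcvy hcvz hbx hby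
    hdiv
end

section
/- Baroclinic advection identity: let h > 0 and let v : ℝ² × ℝ → ℝ² be continuously differentiable such that v̄ = 𝒜₂v satisfies ∂_x v̄₁ + ∂_y v̄₂ ≡ 0, and write ṽ = v − v̄. Then for all (x,y) and z ∈ [−h,0]: ℛ[(v·∇_H)v + w(v)∂_z v] = (ṽ·∇_H)ṽ + w(ṽ)∂_z ṽ + (v̄·∇_H)ṽ + (ṽ·∇_H)v̄ − 𝒜[(ṽ·∇_H)ṽ + (∇_H·ṽ)ṽ], where 𝒜 and ℛ = Id − 𝒜 act componentwise. -/
/-!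
Expanding `v = v̄ + ṽ` pointwise, the identity reduces to one between vertical averages,
`𝒜[(v·∇_H)v + w(v)∂_z v] = (v̄·∇_H)v̄ + 𝒜[(ṽ·∇_H)ṽ + (∇_H·ṽ)ṽ]`, where `∂_x v̄ = 𝒜 ∂_x v` and
`∂_y v̄ = 𝒜 ∂_y v` by differentiation under the integral. Since `𝒜(∇_H·v) = ∇_H·v̄ = 0`, the
vertical velocity `w(v)` vanishes at both `z = 0` and `z = -h`, so integrating by parts in `z`
turns `w(v)∂_z v` into `(∇_H·v)v`. The left side is then the average of the bilinear flux form
`(v·∇_H)v + (∇_H·v)v`, and Reynolds averaging, `𝒜B(f, g) = B(𝒜f, 𝒜g) + 𝒜B(f - 𝒜f, g - 𝒜g)`, gives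
the right side, the term `(∇_H·v̄)v̄` vanishing. Finally `w(ṽ) = w(v)` because `∇_H·v̄ = 0`.
-/

open MeasureTheory intervalIntegral

section

variable {E F G : Type*} [NormedAddCommGroup E] [NormedSpace ℝ E]
  [NormedAddCommGroup F] [NormedSpace ℝ F] [NormedAddCommGroup G] [NormedSpace ℝ G] {a b : ℝ}

theorem intervalIntegral.integral_prodMk [CompleteSpace E] [CompleteSpace F] {μ : Measure ℝ}
    {f : ℝ → E} {g : ℝ → F} (hf : IntervalIntegrable f μ a b) (hg : IntervalIntegrable g μ a b) :
    ∫ t in a..b, (f t, g t) ∂μ = (∫ t in a..b, f t ∂μ, ∫ t in a..b, g t ∂μ) := by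
  have hfg : IntervalIntegrable (fun t => (f t, g t)) μ a b :=
    ⟨hf.1.prodMk hg.1, hf.2.prodMk hg.2⟩
  exact Prod.ext ((ContinuousLinearMap.fst ℝ E F).intervalIntegral_comp_comm hfg).symm
    ((ContinuousLinearMap.snd ℝ E F).intervalIntegral_comp_comm hfg).symm

theorem hasDerivAt_intervalIntegral_of_continuous_s9 {f f' : ℝ → ℝ → E}
    (hf : ∀ s t, HasDerivAt (f · t) (f' s t) s) (hcf : Continuous (Function.uncurry f))
    (hcf' : Continuous (Function.uncurry f')) (s : ℝ) :
    HasDerivAt (fun s => ∫ t in a..b, f s t) (∫ t in a..b, f' s t) s := by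
  obtain ⟨C, hC⟩ := ((isCompact_closedBall s 1).prod isCompact_uIcc).exists_bound_of_continuousOn
    hcf'.continuousOn
  have hslice {g : ℝ → ℝ → E} (hg : Continuous (Function.uncurry g)) (s : ℝ) :
      Continuous (g s) := hg.comp (Continuous.prodMk_right s)
  refine (hasDerivAt_integral_of_dominated_loc_of_deriv_le (bound := fun _ => C)
    (Metric.closedBall_mem_nhds s one_pos)
    (.of_forall fun s => (hslice hcf s).aestronglyMeasurable)
    ((hslice hcf s).intervalIntegrable _ _) (hslice hcf' s).aestronglyMeasurable
    (.of_forall fun t ht s' hs' => hC (s', t) ⟨hs', Set.uIoc_subset_uIcc ht⟩)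
    intervalIntegrable_const (.of_forall fun t _ s' _ => hf s' t)).2

theorem ContinuousLinearMap.intervalIntegrable_comp (L : E →L[ℝ] F) {f : ℝ → E} {μ : Measure ℝ}
    (hf : IntervalIntegrable f μ a b) : IntervalIntegrable (fun t => L (f t)) μ a b :=
  ⟨L.integrable_comp hf.1, L.integrable_comp hf.2⟩

theorem integral_bilin_sub_sub_of_integral_eq_smul [CompleteSpace E] [CompleteSpace F]
    [CompleteSpace G] (B : E →L[ℝ] F →L[ℝ] G) {f : ℝ → E} {g : ℝ → F} {c : E} {e : F}
    (hf : IntervalIntegrable f volume a b) (hg : IntervalIntegrable g volume a b)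
    (hfg : IntervalIntegrable (fun t => B (f t) (g t)) volume a b)
    (hc : ∫ t in a..b, f t = (b - a) • c) (he : ∫ t in a..b, g t = (b - a) • e) :
    ∫ t in a..b, B (f t - c) (g t - e) = (∫ t in a..b, B (f t) (g t)) - (b - a) • B c e := by
  have hexpand : ∀ t, B (f t - c) (g t - e)
      = B (f t) (g t) - (B c (g t) + B.flip e (f t)) + B c e := fun t => by
    simp only [map_sub, sub_apply, ContinuousLinearMap.flip_apply]
    abel
  have hlin := ((B c).intervalIntegrable_comp hg).add ((B.flip e).intervalIntegrable_comp hf)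
  simp_rw [hexpand]
  rw [integral_add (hfg.sub hlin) intervalIntegrable_const, integral_sub hfg hlin,
    integral_add ((B c).intervalIntegrable_comp hg) ((B.flip e).intervalIntegrable_comp hf),
    (B c).intervalIntegral_comp_comm hg, (B.flip e).intervalIntegral_comp_comm hf, hc, he,
    intervalIntegral.integral_const]
  simp only [map_smul, ContinuousLinearMap.flip_apply]
  module

theorem integral_integral_smul_eq_integral_smul_of_hasDerivAt [CompleteSpace E]
    {φ : ℝ → ℝ} {u u' : ℝ → E} (hφ : Continuous φ)
    (hu : ∀ t ∈ Set.uIcc a b, HasDerivAt u (u' t) t) (hu' : IntervalIntegrable u' volume a b)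
    (hφ0 : ∫ t in a..b, φ t = 0) :
    ∫ t in a..b, (∫ s in t..b, φ s) • u' t = ∫ t in a..b, φ t • u t := by
  have hΦ : ∀ t ∈ Set.uIcc a b, HasDerivAt (fun t => ∫ s in t..b, φ s) (-φ t) t := fun t _ =>
    integral_hasDerivAt_left (hφ.intervalIntegrable _ _) (hφ.stronglyMeasurableAtFilter _ _)
      hφ.continuousAt
  rw [integral_smul_deriv_eq_deriv_smul hΦ hu (hφ.intervalIntegrable _ _).neg hu']
  simp [hφ0]

end

/-- For `p = (∂_x w, ∂_y w)`, `horizDiv p = ∇_H·w` and `fluxDiv u p = (u·∇_H)w + (∇_H·w)u`. -/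
def horizDiv : (ℝ × ℝ) × (ℝ × ℝ) →L[ℝ] ℝ :=
  (ContinuousLinearMap.fst ℝ ℝ ℝ).comp (ContinuousLinearMap.fst ℝ _ _)
    + (ContinuousLinearMap.snd ℝ ℝ ℝ).comp (ContinuousLinearMap.snd ℝ _ _)

@[simp]
theorem horizDiv_apply (p : (ℝ × ℝ) × (ℝ × ℝ)) : horizDiv p = p.1.1 + p.2.2 := rfl

noncomputable def fluxDiv : (ℝ × ℝ) →L[ℝ] (ℝ × ℝ) × (ℝ × ℝ) →L[ℝ] ℝ × ℝ :=
  LinearMap.toContinuousLinearMap <| LinearMap.toContinuousLinearMap.toLinearMap ∘ₗ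
    LinearMap.mk₂ ℝ (fun u p => u.1 • p.1 + u.2 • p.2 + horizDiv p • u)
      (fun _ _ _ => by simp only [Prod.fst_add, Prod.snd_add]; module)
      (fun _ _ _ => by simp only [Prod.smul_fst, Prod.smul_snd, smul_eq_mul]; module)
      (fun _ _ _ => by simp only [map_add, Prod.fst_add, Prod.snd_add]; module)
      (fun _ _ _ => by simp only [map_smul, Prod.smul_fst, Prod.smul_snd, smul_eq_mul]; module)

@[simp]
theorem fluxDiv_apply (u : ℝ × ℝ) (p : (ℝ × ℝ) × (ℝ × ℝ)) :
    fluxDiv u p = u.1 • p.1 + u.2 • p.2 + horizDiv p • u := rfl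

theorem integral_fluctuation_flux_eq {a b : ℝ} {V X Y Z : ℝ → ℝ × ℝ} {vb p q : ℝ × ℝ}
    (hV : Continuous V) (hX : Continuous X) (hY : Continuous Y) (hZ : Continuous Z)
    (hVZ : ∀ t, HasDerivAt V (Z t) t) (hvb : ∫ t in a..b, V t = (b - a) • vb)
    (hp : ∫ t in a..b, X t = (b - a) • p) (hq : ∫ t in a..b, Y t = (b - a) • q)
    (hpq : p.1 + q.2 = 0) :
    ∫ t in a..b, ((V t - vb).1 • (X t - p) + (V t - vb).2 • (Y t - q)
        + ((X t - p).1 + (Y t - q).2) • (V t - vb))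
      = (∫ t in a..b, ((V t).1 • X t + (V t).2 • Y t
          + (∫ s in t..b, ((X s).1 + (Y s).2)) • Z t))
        - (b - a) • (vb.1 • p + vb.2 • q) := by
  have hG : Continuous fun t => (X t, Y t) := hX.prodMk hY
  have hintG : ∫ t in a..b, (X t, Y t) = (b - a) • (p, q) := by
    rw [integral_prodMk (hX.intervalIntegrable _ _) (hY.intervalIntegrable _ _), hp, hq]
    rfl
  have hdiv : Continuous fun t => (X t).1 + (Y t).2 := horizDiv.continuous.comp hG
  have hdiv0 : ∫ t in a..b, ((X t).1 + (Y t).2) = 0 := by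
    have := horizDiv.intervalIntegral_comp_comm (hG.intervalIntegrable (μ := volume) a b)
    simp only [horizDiv_apply, hintG, map_smul, smul_eq_mul] at this
    rw [this]
    linear_combination (b - a) * hpq
  have hIBP := integral_integral_smul_eq_integral_smul_of_hasDerivAt hdiv (fun t _ => hVZ t)
    (hZ.intervalIntegrable _ _) hdiv0
  have hReynolds := integral_bilin_sub_sub_of_integral_eq_smul fluxDiv
    (hV.intervalIntegrable _ _) (hG.intervalIntegrable _ _)
    ((fluxDiv.continuous₂.comp₂ hV hG).intervalIntegrable _ _) hvb hintG
  simp only [fluxDiv_apply, horizDiv_apply, Prod.mk_sub_mk, hpq, zero_smul, add_zero] at hReynolds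
  have hadv : Continuous fun t => (V t).1 • X t + (V t).2 • Y t := by fun_prop
  have hW : Continuous fun t => ∫ s in t..b, ((X s).1 + (Y s).2) :=
    continuous_iff_continuousAt.2 fun t => (integral_hasDerivAt_left (hdiv.intervalIntegrable _ _)
      (hdiv.stronglyMeasurableAtFilter _ _) hdiv.continuousAt).continuousAt
  rw [hReynolds, integral_add (hadv.intervalIntegrable _ _)
      ((hdiv.fun_smul hV).intervalIntegrable _ _),
    integral_add (hadv.intervalIntegrable _ _) ((hW.fun_smul hZ).intervalIntegrable _ _), hIBP]

/-- **Baroclinic advection identity.**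
Let `v : ℝ² × ℝ → ℝ²` be continuously differentiable (partial derivatives
`vx, vy, vz` supplied as data, jointly continuous), with `v̄ = 𝒜₂v` differentiable
with horizontal partials `vbx, vby` and `∂_x v̄₁ + ∂_y v̄₂ ≡ 0`; write `ṽ = v − v̄`
(so `∂_x ṽ = vx − vbx`, `∂_y ṽ = vy − vby`, `∂_z ṽ = vz`). Then for all `(x,y)` and
`z ∈ [−h,0]`:
`ℛ[(v·∇_H)v + w(v)∂_z v]
  = (ṽ·∇_H)ṽ + w(ṽ)∂_z ṽ + (v̄·∇_H)ṽ + (ṽ·∇_H)v̄ − 𝒜[(ṽ·∇_H)ṽ + (∇_H·ṽ)ṽ]`,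
where `𝒜f = (1/h)∫_{−h}^0 f dz'` and `ℛ = Id − 𝒜`. -/
theorem baroclinic_advection_identity
    (h : ℝ) (hh : 0 < h)
    (v vx vy vz : ℝ → ℝ → ℝ → ℝ × ℝ)
    (vbx vby : ℝ → ℝ → ℝ × ℝ)
    (hvx : ∀ x y z : ℝ, HasDerivAt (fun x' => v x' y z) (vx x y z) x)
    (hvy : ∀ x y z : ℝ, HasDerivAt (fun y' => v x y' z) (vy x y z) y)
    (hvz : ∀ x y z : ℝ, HasDerivAt (fun z' => v x y z') (vz x y z) z)
    (hcv : Continuous fun p : ℝ × ℝ × ℝ => v p.1 p.2.1 p.2.2)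
    (hcvx : Continuous fun p : ℝ × ℝ × ℝ => vx p.1 p.2.1 p.2.2)
    (hcvy : Continuous fun p : ℝ × ℝ × ℝ => vy p.1 p.2.1 p.2.2)
    (hcvz : Continuous fun p : ℝ × ℝ × ℝ => vz p.1 p.2.1 p.2.2)
    (hbx : ∀ x y : ℝ, HasDerivAt (fun x' => baroAvg2 h v x' y) (vbx x y) x)
    (hby : ∀ x y : ℝ, HasDerivAt (fun y' => baroAvg2 h v x y') (vby x y) y)
    (hdiv : ∀ x y : ℝ, (vbx x y).1 + (vby x y).2 = 0) :
    ∀ x y : ℝ, ∀ z ∈ Set.Icc (-h) (0:ℝ),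
      ((v x y z).1 • vx x y z + (v x y z).2 • vy x y z
          + (∫ z' in z..(0:ℝ), ((vx x y z').1 + (vy x y z').2)) • vz x y z)
        - h⁻¹ • (∫ t in (-h)..(0:ℝ),
            ((v x y t).1 • vx x y t + (v x y t).2 • vy x y t
              + (∫ z' in t..(0:ℝ), ((vx x y z').1 + (vy x y z').2)) • vz x y t))
      = ((v x y z - baroAvg2 h v x y).1 • (vx x y z - vbx x y)
            + (v x y z - baroAvg2 h v x y).2 • (vy x y z - vby x y))
        + (∫ z' in z..(0:ℝ),
            ((vx x y z' - vbx x y).1 + (vy x y z' - vby x y).2)) • vz x y z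
        + ((baroAvg2 h v x y).1 • (vx x y z - vbx x y)
            + (baroAvg2 h v x y).2 • (vy x y z - vby x y))
        + ((v x y z - baroAvg2 h v x y).1 • vbx x y
            + (v x y z - baroAvg2 h v x y).2 • vby x y)
        - h⁻¹ • (∫ t in (-h)..(0:ℝ),
            ((v x y t - baroAvg2 h v x y).1 • (vx x y t - vbx x y)
              + (v x y t - baroAvg2 h v x y).2 • (vy x y t - vby x y)
              + ((vx x y t - vbx x y).1 + (vy x y t - vby x y).2)
                  • (v x y t - baroAvg2 h v x y))) := by
  intro x y z _
  have hne : h ≠ 0 := hh.ne'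
  have hlen : (0 : ℝ) - -h = h := by ring
  have hcol {f : ℝ → ℝ → ℝ → ℝ × ℝ} (hf : Continuous fun p : ℝ × ℝ × ℝ => f p.1 p.2.1 p.2.2) :
      Continuous (f x y) := hf.comp (f := fun t => (x, y, t)) (by fun_prop)
  have hV : ∫ t in (-h)..0, v x y t = (0 - -h) • baroAvg2 h v x y := by
    rw [hlen, baroAvg2, smul_inv_smul₀ hne]
  have hX : ∫ t in (-h)..0, vx x y t = (0 - -h) • vbx x y := by
    rw [hlen, (hbx x y).unique ((hasDerivAt_intervalIntegral_of_continuous_s9 (fun s t => hvx s y t)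
      (hcv.comp (f := fun q : ℝ × ℝ => (q.1, y, q.2)) (by fun_prop))
      (hcvx.comp (f := fun q : ℝ × ℝ => (q.1, y, q.2)) (by fun_prop)) x).const_smul h⁻¹),
      smul_inv_smul₀ hne]
  have hY : ∫ t in (-h)..0, vy x y t = (0 - -h) • vby x y := by
    rw [hlen, (hby x y).unique ((hasDerivAt_intervalIntegral_of_continuous_s9 (fun s t => hvy x s t)
      (hcv.comp (f := fun q : ℝ × ℝ => (x, q)) (by fun_prop))
      (hcvy.comp (f := fun q : ℝ × ℝ => (x, q)) (by fun_prop)) y).const_smul h⁻¹),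
      smul_inv_smul₀ hne]
  have hw : ∫ z' in z..(0:ℝ), ((vx x y z' - vbx x y).1 + (vy x y z' - vby x y).2)
      = ∫ z' in z..(0:ℝ), ((vx x y z').1 + (vy x y z').2) :=
    integral_congr fun t _ => by simp only [Prod.fst_sub, Prod.snd_sub]; linarith [hdiv x y]
  rw [hw, integral_fluctuation_flux_eq (hcol hcv) (hcol hcvx) (hcol hcvy) (hcol hcvz) (hvz x y)
    hV hX hY (hdiv x y), hlen, smul_sub h⁻¹, inv_smul_smul₀ hne]
  simp only [Prod.fst_sub, Prod.snd_sub]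
  module
end
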